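/- For 0 ≤ ν ≤ 4, the kernel of the Chern–Moser operator T_ν is spanned by the following linearly independent quadruples (η,α,β,ξ): for ν = 0 by (1, 1, 0, 0); for ν = 1 by (x, 0, 1, 0) and (0, b, 0, −1); for ν = 2 by (y, a, b, 0) and (0, 0, b, −x); for ν = 3 by (0, ab, b², −y) and (xy, 0, a, x²); for ν = 4 by (y², a², ab, xy). In particular these kernels have dimensions 1, 2, 2, 2, 1 respectively (8 in total, corresponding to the sl(3,ℝ) symmetry of the model y = a+bx). -/
import Mathlib


/- Weights: for polynomials in (x,y) (variables of `MvPolynomial (Fin 2) ℝ`,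
   indices 0,1): x ↦ 1, y ↦ 2; for polynomials in (a,b): a ↦ 2, b ↦ 1.
   A quadruple (η,α,β,ξ) lives in the product module `Quad`. -/

open MvPolynomial

/-- weights on the variables (x, y) -/
noncomputable def wXY : Fin 2 → ℕ := ![1, 2]
/-- weights on the variables (a, b) -/
noncomputable def wAB : Fin 2 → ℕ := ![2, 1]

/-- quadruples (η, α, β, ξ) with η, ξ polynomials in (x,y) and α, β in (a,b) -/
abbrev Quad : Type :=
  MvPolynomial (Fin 2) ℝ × MvPolynomial (Fin 2) ℝ ×
    MvPolynomial (Fin 2) ℝ × MvPolynomial (Fin 2) ℝ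

/-- The Chern–Moser operator:
`T(η,α,β,ξ)(a,b,x) = η(x, a+bx) − α(a,b) − x·β(a,b) − b·ξ(x, a+bx)`. -/
noncomputable def cmT (q : Quad) : MvPolynomial (Fin 3) ℝ :=
  aeval ![(X 2 : MvPolynomial (Fin 3) ℝ), X 0 + X 1 * X 2] q.1
  - aeval ![(X 0 : MvPolynomial (Fin 3) ℝ), X 1] q.2.1
  - X 2 * aeval ![(X 0 : MvPolynomial (Fin 3) ℝ), X 1] q.2.2.1
  - X 1 * aeval ![(X 2 : MvPolynomial (Fin 3) ℝ), X 0 + X 1 * X 2] q.2.2.2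

/-- homogeneity of the quadruple (η,α,β,ξ) in weight ν ≥ 1:
η, α of weight ν and β, ξ of weight ν − 1 -/
def QuadHomog (ν : ℕ) (q : Quad) : Prop :=
  q.1.IsWeightedHomogeneous wXY ν ∧ q.2.1.IsWeightedHomogeneous wAB ν ∧
    q.2.2.1.IsWeightedHomogeneous wAB (ν - 1) ∧ q.2.2.2.IsWeightedHomogeneous wXY (ν - 1)

-- the kernel generators ---------------------------------------------------
/-- (1, 1, 0, 0) -/
noncomputable def g0 : Quad := (1, 1, 0, 0)
/-- (x, 0, 1, 0) -/
noncomputable def g1a : Quad := (X 0, 0, 1, 0)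
/-- (0, b, 0, −1) -/
noncomputable def g1b : Quad := (0, X 1, 0, -1)
/-- (y, a, b, 0) -/
noncomputable def g2a : Quad := (X 1, X 0, X 1, 0)
/-- (0, 0, b, −x) -/
noncomputable def g2b : Quad := (0, 0, X 1, -(X 0))
/-- (0, ab, b², −y) -/
noncomputable def g3a : Quad := (0, X 0 * X 1, X 1 ^ 2, -(X 1))
/-- (xy, 0, a, x²) -/
noncomputable def g3b : Quad := (X 0 * X 1, 0, X 0, X 0 ^ 2)
/-- (y², a², ab, xy) -/
noncomputable def g4 : Quad := (X 1 ^ 2, X 0 ^ 2, X 0 * X 1, X 0 * X 1)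

section CMAux
open MvPolynomial

private lemma fin2_finsupp_eq (d : Fin 2 →₀ ℕ) :
    d = Finsupp.single 0 (d 0) + Finsupp.single 1 (d 1) := by
  ext a; fin_cases a <;> simp

private lemma weight_fin2 (w : Fin 2 → ℕ) (d : Fin 2 →₀ ℕ) :
    Finsupp.weight w d = d 0 * w 0 + d 1 * w 1 := by
  rw [Finsupp.weight_apply, Finsupp.sum_fintype]
  · simp [Fin.sum_univ_two, mul_comm]
  · intro i; simp

private lemma cxy_eq_monomial (c : ℝ) (i j : ℕ) :
    (C c * X 0 ^ i * X 1 ^ j : MvPolynomial (Fin 2) ℝ) =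
      monomial (Finsupp.single 0 i + Finsupp.single 1 j) c := by
  simp [X_pow_eq_monomial, C_mul_monomial, monomial_mul]

private lemma decomp (w : Fin 2 → ℕ) (hw0 : 1 ≤ w 0) (hw1 : 1 ≤ w 1) (n : ℕ)
    (p : MvPolynomial (Fin 2) ℝ) (hp : p.IsWeightedHomogeneous w n) :
    p = ∑ ij ∈ (Finset.range (n+1) ×ˢ Finset.range (n+1)).filter
        (fun ij => ij.1 * w 0 + ij.2 * w 1 = n),
      C (coeff (Finsupp.single 0 ij.1 + Finsupp.single 1 ij.2) p) *
        X 0 ^ ij.1 * X 1 ^ ij.2 := by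
  ext d
  rw [coeff_sum]
  simp only [cxy_eq_monomial, coeff_monomial]
  by_cases hd : Finsupp.weight w d = n
  · have hw : d 0 * w 0 + d 1 * w 1 = n := by rw [← weight_fin2 w d]; exact_mod_cast hd
    rw [Finset.sum_eq_single (d 0, d 1)]
    · rw [if_pos (fin2_finsupp_eq d).symm, ← fin2_finsupp_eq]
    · rintro ⟨i, j⟩ hmem hne
      rw [if_neg]
      intro h
      apply hne
      have h0 := congrArg (fun f : Fin 2 →₀ ℕ => f 0) h
      have h1 := congrArg (fun f : Fin 2 →₀ ℕ => f 1) h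
      simp at h0 h1
      simp [h0, h1]
    · intro hmem
      exfalso
      apply hmem
      simp only [Finset.mem_filter, Finset.mem_product, Finset.mem_range]
      have b0 : d 0 ≤ d 0 * w 0 := Nat.le_mul_of_pos_right _ hw0
      have b1 : d 1 ≤ d 1 * w 1 := Nat.le_mul_of_pos_right _ hw1
      refine ⟨⟨?_, ?_⟩, hw⟩ <;> omega
  · have h0 : coeff d p = 0 := by
      by_contra h; exact hd (hp h)
    rw [h0]
    symm
    apply Finset.sum_eq_zero
    rintro ⟨i, j⟩ hmem
    rw [if_neg]
    intro h
    apply hd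
    rw [← h, weight_fin2]
    simp only [Finset.mem_filter, Finset.mem_product] at hmem
    simpa using hmem.2

private lemma decompXY0 (p : MvPolynomial (Fin 2) ℝ) (hp : p.IsWeightedHomogeneous wXY 0) :
    p = C (coeff 0 p) := by
  conv_lhs => rw [decomp wXY (by norm_num [wXY]) (by norm_num [wXY]) 0 p hp]
  norm_num [wXY, Finset.sum_filter, Finset.sum_product, Finset.sum_range_succ]

private lemma decompXY1 (p : MvPolynomial (Fin 2) ℝ) (hp : p.IsWeightedHomogeneous wXY 1) :
    p = C (coeff (Finsupp.single 0 1) p) * X 0 := by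
  conv_lhs => rw [decomp wXY (by norm_num [wXY]) (by norm_num [wXY]) 1 p hp]
  norm_num [wXY, Finset.sum_filter, Finset.sum_product, Finset.sum_range_succ]

private lemma decompXY2 (p : MvPolynomial (Fin 2) ℝ) (hp : p.IsWeightedHomogeneous wXY 2) :
    p = C (coeff (Finsupp.single 0 2) p) * X 0 ^ 2 + C (coeff (Finsupp.single 1 1) p) * X 1 := by
  conv_lhs => rw [decomp wXY (by norm_num [wXY]) (by norm_num [wXY]) 2 p hp]
  norm_num [wXY, Finset.sum_filter, Finset.sum_product, Finset.sum_range_succ]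
  ring

private lemma decompXY3 (p : MvPolynomial (Fin 2) ℝ) (hp : p.IsWeightedHomogeneous wXY 3) :
    p = C (coeff (Finsupp.single 0 3) p) * X 0 ^ 3 +
      C (coeff (Finsupp.single 0 1 + Finsupp.single 1 1) p) * X 0 * X 1 := by
  conv_lhs => rw [decomp wXY (by norm_num [wXY]) (by norm_num [wXY]) 3 p hp]
  norm_num [wXY, Finset.sum_filter, Finset.sum_product, Finset.sum_range_succ]
  ring

private lemma decompXY4 (p : MvPolynomial (Fin 2) ℝ) (hp : p.IsWeightedHomogeneous wXY 4) :
    p = C (coeff (Finsupp.single 0 4) p) * X 0 ^ 4 +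
      C (coeff (Finsupp.single 0 2 + Finsupp.single 1 1) p) * X 0 ^ 2 * X 1 +
      C (coeff (Finsupp.single 1 2) p) * X 1 ^ 2 := by
  conv_lhs => rw [decomp wXY (by norm_num [wXY]) (by norm_num [wXY]) 4 p hp]
  norm_num [wXY, Finset.sum_filter, Finset.sum_product, Finset.sum_range_succ]
  ring

private lemma decompAB0 (p : MvPolynomial (Fin 2) ℝ) (hp : p.IsWeightedHomogeneous wAB 0) :
    p = C (coeff 0 p) := by
  conv_lhs => rw [decomp wAB (by norm_num [wAB]) (by norm_num [wAB]) 0 p hp]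
  norm_num [wAB, Finset.sum_filter, Finset.sum_product, Finset.sum_range_succ]

private lemma decompAB1 (p : MvPolynomial (Fin 2) ℝ) (hp : p.IsWeightedHomogeneous wAB 1) :
    p = C (coeff (Finsupp.single 1 1) p) * X 1 := by
  conv_lhs => rw [decomp wAB (by norm_num [wAB]) (by norm_num [wAB]) 1 p hp]
  norm_num [wAB, Finset.sum_filter, Finset.sum_product, Finset.sum_range_succ]

private lemma decompAB2 (p : MvPolynomial (Fin 2) ℝ) (hp : p.IsWeightedHomogeneous wAB 2) :
    p = C (coeff (Finsupp.single 0 1) p) * X 0 + C (coeff (Finsupp.single 1 2) p) * X 1 ^ 2 := by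
  conv_lhs => rw [decomp wAB (by norm_num [wAB]) (by norm_num [wAB]) 2 p hp]
  norm_num [wAB, Finset.sum_filter, Finset.sum_product, Finset.sum_range_succ]
  ring

private lemma decompAB3 (p : MvPolynomial (Fin 2) ℝ) (hp : p.IsWeightedHomogeneous wAB 3) :
    p = C (coeff (Finsupp.single 0 1 + Finsupp.single 1 1) p) * X 0 * X 1 +
      C (coeff (Finsupp.single 1 3) p) * X 1 ^ 3 := by
  conv_lhs => rw [decomp wAB (by norm_num [wAB]) (by norm_num [wAB]) 3 p hp]
  norm_num [wAB, Finset.sum_filter, Finset.sum_product, Finset.sum_range_succ]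
  ring

private lemma decompAB4 (p : MvPolynomial (Fin 2) ℝ) (hp : p.IsWeightedHomogeneous wAB 4) :
    p = C (coeff (Finsupp.single 0 2) p) * X 0 ^ 2 +
      C (coeff (Finsupp.single 0 1 + Finsupp.single 1 2) p) * X 0 * X 1 ^ 2 +
      C (coeff (Finsupp.single 1 4) p) * X 1 ^ 4 := by
  conv_lhs => rw [decomp wAB (by norm_num [wAB]) (by norm_num [wAB]) 4 p hp]
  norm_num [wAB, Finset.sum_filter, Finset.sum_product, Finset.sum_range_succ]
  ring

private lemma cmT_add (p q : Quad) : cmT (p + q) = cmT p + cmT q := by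
  obtain ⟨p1, p2, p3, p4⟩ := p
  obtain ⟨q1, q2, q3, q4⟩ := q
  simp only [cmT, Prod.mk_add_mk, map_add]
  ring

private lemma cmT_smul (r : ℝ) (q : Quad) : cmT (r • q) = r • cmT q := by
  obtain ⟨q1, q2, q3, q4⟩ := q
  simp only [cmT, Prod.smul_mk, map_smul]
  simp only [smul_eq_C_mul]
  ring

private lemma cmT_g0 : cmT g0 = 0 := by simp [cmT, g0]
private lemma cmT_g1a : cmT g1a = 0 := by simp [cmT, g1a]
private lemma cmT_g1b : cmT g1b = 0 := by simp [cmT, g1b] <;> ring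
private lemma cmT_g2a : cmT g2a = 0 := by simp [cmT, g2a] <;> ring
private lemma cmT_g2b : cmT g2b = 0 := by simp [cmT, g2b] <;> ring
private lemma cmT_g3a : cmT g3a = 0 := by simp [cmT, g3a] <;> ring
private lemma cmT_g3b : cmT g3b = 0 := by simp [cmT, g3b] <;> ring
private lemma cmT_g4 : cmT g4 = 0 := by simp [cmT, g4] <;> ring

private lemma span_pair_ker {u v : Quad} (hu : cmT u = 0) (hv : cmT v = 0) :
    ∀ q ∈ Submodule.span ℝ ({u, v} : Set Quad), cmT q = 0 := by
  intro q hq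
  rw [Submodule.mem_span_pair] at hq
  obtain ⟨s, t, rfl⟩ := hq
  rw [cmT_add, cmT_smul, cmT_smul, hu, hv]
  simp

private lemma span_single_ker {u : Quad} (hu : cmT u = 0) :
    ∀ q ∈ Submodule.span ℝ ({u} : Set Quad), cmT q = 0 := by
  intro q hq
  rw [Submodule.mem_span_singleton] at hq
  obtain ⟨s, rfl⟩ := hq
  rw [cmT_smul, hu]
  simp

private lemma evalT0 (e1 a1 A B Xv : ℝ) :
    eval ![A, B, Xv] (cmT (C e1, C a1, 0, 0)) = e1 - a1 := by
  simp [cmT]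

private lemma evalT1 (e1 a1 b1 c1 A B Xv : ℝ) :
    eval ![A, B, Xv] (cmT (C e1 * X 0, C a1 * X 1, C b1, C c1)) =
      e1 * Xv - a1 * B - Xv * b1 - B * c1 := by
  simp [cmT] <;> ring

private lemma evalT2 (e1 e2 a1 a2 b1 c1 A B Xv : ℝ) :
    eval ![A, B, Xv] (cmT (C e1 * X 0 ^ 2 + C e2 * X 1, C a1 * X 0 + C a2 * X 1 ^ 2,
      C b1 * X 1, C c1 * X 0)) =
      e1 * Xv ^ 2 + e2 * (A + B * Xv) - (a1 * A + a2 * B ^ 2) - Xv * (b1 * B)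
        - B * (c1 * Xv) := by
  simp [cmT] <;> ring

private lemma evalT3 (e1 e2 a1 a2 b1 b2 c1 c2 A B Xv : ℝ) :
    eval ![A, B, Xv] (cmT (C e1 * X 0 ^ 3 + C e2 * X 0 * X 1,
      C a1 * X 0 * X 1 + C a2 * X 1 ^ 3, C b1 * X 0 + C b2 * X 1 ^ 2,
      C c1 * X 0 ^ 2 + C c2 * X 1)) =
      e1 * Xv ^ 3 + e2 * Xv * (A + B * Xv) - (a1 * A * B + a2 * B ^ 3)
        - Xv * (b1 * A + b2 * B ^ 2) - B * (c1 * Xv ^ 2 + c2 * (A + B * Xv)) := by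
  simp [cmT] <;> ring

private lemma evalT4 (e1 e2 e3 a1 a2 a3 b1 b2 c1 c2 A B Xv : ℝ) :
    eval ![A, B, Xv] (cmT (C e1 * X 0 ^ 4 + C e2 * X 0 ^ 2 * X 1 + C e3 * X 1 ^ 2,
      C a1 * X 0 ^ 2 + C a2 * X 0 * X 1 ^ 2 + C a3 * X 1 ^ 4,
      C b1 * X 0 * X 1 + C b2 * X 1 ^ 3, C c1 * X 0 ^ 3 + C c2 * X 0 * X 1)) =
      e1 * Xv ^ 4 + e2 * Xv ^ 2 * (A + B * Xv) + e3 * (A + B * Xv) ^ 2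
        - (a1 * A ^ 2 + a2 * A * B ^ 2 + a3 * B ^ 4)
        - Xv * (b1 * A * B + b2 * B ^ 3)
        - B * (c1 * Xv ^ 3 + c2 * Xv * (A + B * Xv)) := by
  simp [cmT] <;> ring

end CMAux

/-- For 0 ≤ ν ≤ 4 the kernel of the Chern–Moser operator `T_ν` is spanned by the
indicated linearly independent quadruples: for ν = 0 by (1,1,0,0), for ν = 1 by
(x,0,1,0) and (0,b,0,−1), for ν = 2 by (y,a,b,0) and (0,0,b,−x), for ν = 3 by
(0,ab,b²,−y) and (xy,0,a,x²), for ν = 4 by (y²,a²,ab,xy).  (For ν = 0 the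
quadruple has β = ξ = 0.) -/
theorem stmt2 :
    -- ν = 0
    ((∀ q : Quad, q.1.IsWeightedHomogeneous wXY 0 → q.2.1.IsWeightedHomogeneous wAB 0 →
        q.2.2.1 = 0 → q.2.2.2 = 0 →
        (cmT q = 0 ↔ q ∈ Submodule.span ℝ ({g0} : Set Quad))) ∧
      LinearIndependent ℝ ![g0]) ∧
    -- ν = 1
    ((∀ q : Quad, QuadHomog 1 q →
        (cmT q = 0 ↔ q ∈ Submodule.span ℝ ({g1a, g1b} : Set Quad))) ∧
      LinearIndependent ℝ ![g1a, g1b]) ∧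
    -- ν = 2
    ((∀ q : Quad, QuadHomog 2 q →
        (cmT q = 0 ↔ q ∈ Submodule.span ℝ ({g2a, g2b} : Set Quad))) ∧
      LinearIndependent ℝ ![g2a, g2b]) ∧
    -- ν = 3
    ((∀ q : Quad, QuadHomog 3 q →
        (cmT q = 0 ↔ q ∈ Submodule.span ℝ ({g3a, g3b} : Set Quad))) ∧
      LinearIndependent ℝ ![g3a, g3b]) ∧
    -- ν = 4
    ((∀ q : Quad, QuadHomog 4 q →
        (cmT q = 0 ↔ q ∈ Submodule.span ℝ ({g4} : Set Quad))) ∧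
      LinearIndependent ℝ ![g4]) := by
  refine ⟨⟨?_, ?_⟩, ⟨?_, ?_⟩, ⟨?_, ?_⟩, ⟨?_, ?_⟩, ⟨?_, ?_⟩⟩
  -- ν = 0 kernel
  · rintro ⟨η, α, β, ξ⟩ h1 h2 h3 h4
    simp only at h1 h2 h3 h4
    subst h3; subst h4
    constructor
    · intro h0
      rw [decompXY0 η h1] at h0 ⊢
      rw [decompAB0 α h2] at h0 ⊢
      set e1 := coeff 0 η
      set a1 := coeff 0 α
      have key : ∀ A B Xv : ℝ, e1 - a1 = 0 := by
        intro A B Xv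
        have h := congrArg (eval ![A, B, Xv]) h0
        rwa [evalT0, map_zero] at h
      have k1 := key 0 0 0
      have r1 : a1 = e1 := by linarith
      rw [Submodule.mem_span_singleton]
      refine ⟨e1, ?_⟩
      simp only [g0, Prod.smul_mk, Prod.mk.injEq, r1]
      refine ⟨?_, ?_, ?_, ?_⟩ <;> simp [smul_eq_C_mul]
    · exact fun hq => span_single_ker cmT_g0 _ hq
  -- ν = 0 linear independence
  · rw [Fintype.linearIndependent_iff]
    intro g hg i
    fin_cases i
    have h := congrArg Prod.fst hg
    simp only [Fin.sum_univ_one, Matrix.cons_val_zero, g0, Prod.smul_mk, Prod.fst_add,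
      Prod.fst_zero, smul_eq_C_mul, mul_one] at h
    simpa using h
  -- ν = 1 kernel
  · rintro ⟨η, α, β, ξ⟩ hq
    obtain ⟨h1, h2, h3, h4⟩ := hq
    simp only at h1 h2 h3 h4
    constructor
    · intro h0
      rw [decompXY1 η h1] at h0 ⊢
      rw [decompAB1 α h2] at h0 ⊢
      rw [decompAB0 β h3] at h0 ⊢
      rw [decompXY0 ξ h4] at h0 ⊢
      set e1 := coeff (Finsupp.single 0 1) η
      set a1 := coeff (Finsupp.single 1 1) α
      set b1 := coeff 0 β
      set c1 := coeff 0 ξ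
      have key : ∀ A B Xv : ℝ, e1 * Xv - a1 * B - Xv * b1 - B * c1 = 0 := by
        intro A B Xv
        have h := congrArg (eval ![A, B, Xv]) h0
        rwa [evalT1, map_zero] at h
      have k1 := key 0 0 1
      have k2 := key 0 1 0
      norm_num at k1 k2
      have r1 : b1 = e1 := by linarith
      have r2 : c1 = -a1 := by linarith
      rw [Submodule.mem_span_pair]
      refine ⟨e1, a1, ?_⟩
      simp only [g1a, g1b, Prod.smul_mk, Prod.mk_add_mk, Prod.mk.injEq, r1, r2]
      refine ⟨?_, ?_, ?_, ?_⟩ <;> simp [smul_eq_C_mul]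
    · exact fun hq => span_pair_ker cmT_g1a cmT_g1b _ hq
  -- ν = 1 linear independence
  · rw [linearIndependent_fin2]
    constructor
    · simp [g1b, Prod.mk_eq_zero, X_ne_zero]
    · intro a h
      have := congrArg (fun q : Quad => q.2.2.1) h
      simp [g1a, g1b] at this
  -- ν = 2 kernel
  · rintro ⟨η, α, β, ξ⟩ hq
    obtain ⟨h1, h2, h3, h4⟩ := hq
    simp only at h1 h2 h3 h4
    constructor
    · intro h0
      rw [decompXY2 η h1] at h0 ⊢
      rw [decompAB2 α h2] at h0 ⊢
      rw [decompAB1 β h3] at h0 ⊢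
      rw [decompXY1 ξ h4] at h0 ⊢
      set e1 := coeff (Finsupp.single 0 2) η
      set e2 := coeff (Finsupp.single 1 1) η
      set a1 := coeff (Finsupp.single 0 1) α
      set a2 := coeff (Finsupp.single 1 2) α
      set b1 := coeff (Finsupp.single 1 1) β
      set c1 := coeff (Finsupp.single 0 1) ξ
      have key : ∀ A B Xv : ℝ, e1 * Xv ^ 2 + e2 * (A + B * Xv) - (a1 * A + a2 * B ^ 2)
          - Xv * (b1 * B) - B * (c1 * Xv) = 0 := by
        intro A B Xv
        have h := congrArg (eval ![A, B, Xv]) h0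
        rwa [evalT2, map_zero] at h
      have k1 := key 0 0 1
      have k2 := key 1 0 0
      have k3 := key 0 1 0
      have k4 := key 0 1 1
      norm_num at k1 k2 k3 k4
      have r1 : e1 = 0 := by linarith
      have r2 : a1 = e2 := by linarith
      have r3 : a2 = 0 := by linarith
      have r4 : c1 = e2 - b1 := by linarith
      rw [Submodule.mem_span_pair]
      refine ⟨e2, b1 - e2, ?_⟩
      simp only [g2a, g2b, Prod.smul_mk, Prod.mk_add_mk, Prod.mk.injEq, r1, r2, r3, r4]
      refine ⟨?_, ?_, ?_, ?_⟩ <;> simp [smul_eq_C_mul] <;> ring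
    · exact fun hq => span_pair_ker cmT_g2a cmT_g2b _ hq
  -- ν = 2 linear independence
  · rw [linearIndependent_fin2]
    constructor
    · simp [g2b, Prod.mk_eq_zero, X_ne_zero]
    · intro a h
      have := congrArg (fun q : Quad => q.1) h
      simp [g2a, g2b, X_ne_zero, eq_comm] at this
  -- ν = 3 kernel
  · rintro ⟨η, α, β, ξ⟩ hq
    obtain ⟨h1, h2, h3, h4⟩ := hq
    simp only at h1 h2 h3 h4
    constructor
    · intro h0
      rw [decompXY3 η h1] at h0 ⊢
      rw [decompAB3 α h2] at h0 ⊢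
      rw [decompAB2 β h3] at h0 ⊢
      rw [decompXY2 ξ h4] at h0 ⊢
      set e1 := coeff (Finsupp.single 0 3) η
      set e2 := coeff (Finsupp.single 0 1 + Finsupp.single 1 1) η
      set a1 := coeff (Finsupp.single 0 1 + Finsupp.single 1 1) α
      set a2 := coeff (Finsupp.single 1 3) α
      set b1 := coeff (Finsupp.single 0 1) β
      set b2 := coeff (Finsupp.single 1 2) β
      set c1 := coeff (Finsupp.single 0 2) ξ
      set c2 := coeff (Finsupp.single 1 1) ξ
      have key : ∀ A B Xv : ℝ, e1 * Xv ^ 3 + e2 * Xv * (A + B * Xv)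
          - (a1 * A * B + a2 * B ^ 3) - Xv * (b1 * A + b2 * B ^ 2)
          - B * (c1 * Xv ^ 2 + c2 * (A + B * Xv)) = 0 := by
        intro A B Xv
        have h := congrArg (eval ![A, B, Xv]) h0
        rwa [evalT3, map_zero] at h
      have k1 := key 0 0 1
      have k2 := key 1 0 1
      have k3 := key 0 1 1
      have k4 := key 0 1 (-1)
      have k5 := key 0 1 2
      have k6 := key 1 1 0
      norm_num at k1 k2 k3 k4 k5 k6
      have r1 : e1 = 0 := by linarith
      have r2 : b1 = e2 := by linarith
      have r3 : c1 = e2 := by linarith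
      have r4 : a2 = 0 := by linarith
      have r5 : c2 = -a1 := by linarith
      have r6 : b2 = a1 := by linarith
      rw [Submodule.mem_span_pair]
      refine ⟨a1, e2, ?_⟩
      simp only [g3a, g3b, Prod.smul_mk, Prod.mk_add_mk, Prod.mk.injEq, r1, r2, r3, r4, r5, r6]
      refine ⟨?_, ?_, ?_, ?_⟩ <;> simp [smul_eq_C_mul] <;> ring
    · exact fun hq => span_pair_ker cmT_g3a cmT_g3b _ hq
  -- ν = 3 linear independence
  · rw [linearIndependent_fin2]
    constructor
    · simp [g3b, Prod.mk_eq_zero, X_ne_zero]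
    · intro a h
      have := congrArg (fun q : Quad => q.2.1) h
      simp [g3a, g3b, X_ne_zero, eq_comm, mul_eq_zero] at this
  -- ν = 4 kernel
  · rintro ⟨η, α, β, ξ⟩ hq
    obtain ⟨h1, h2, h3, h4⟩ := hq
    simp only at h1 h2 h3 h4
    constructor
    · intro h0
      rw [decompXY4 η h1] at h0 ⊢
      rw [decompAB4 α h2] at h0 ⊢
      rw [decompAB3 β h3] at h0 ⊢
      rw [decompXY3 ξ h4] at h0 ⊢
      set e1 := coeff (Finsupp.single 0 4) η
      set e2 := coeff (Finsupp.single 0 2 + Finsupp.single 1 1) η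
      set e3 := coeff (Finsupp.single 1 2) η
      set a1 := coeff (Finsupp.single 0 2) α
      set a2 := coeff (Finsupp.single 0 1 + Finsupp.single 1 2) α
      set a3 := coeff (Finsupp.single 1 4) α
      set b1 := coeff (Finsupp.single 0 1 + Finsupp.single 1 1) β
      set b2 := coeff (Finsupp.single 1 3) β
      set c1 := coeff (Finsupp.single 0 3) ξ
      set c2 := coeff (Finsupp.single 0 1 + Finsupp.single 1 1) ξ
      have key : ∀ A B Xv : ℝ, e1 * Xv ^ 4 + e2 * Xv ^ 2 * (A + B * Xv)
          + e3 * (A + B * Xv) ^ 2 - (a1 * A ^ 2 + a2 * A * B ^ 2 + a3 * B ^ 4)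
          - Xv * (b1 * A * B + b2 * B ^ 3)
          - B * (c1 * Xv ^ 3 + c2 * Xv * (A + B * Xv)) = 0 := by
        intro A B Xv
        have h := congrArg (eval ![A, B, Xv]) h0
        rwa [evalT4, map_zero] at h
      have k1 := key 0 0 1
      have k2 := key 1 0 0
      have k3 := key 1 0 1
      have k4 := key 0 1 0
      have k5 := key 0 1 1
      have k6 := key 0 1 (-1)
      have k7 := key 0 1 2
      have k8 := key 1 1 0
      have k9 := key 1 1 1
      norm_num at k1 k2 k3 k4 k5 k6 k7 k8 k9
      have r1 : e1 = 0 := by linarith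
      have r2 : a1 = e3 := by linarith
      have r3 : e2 = 0 := by linarith
      have r4 : a3 = 0 := by linarith
      have r5 : c2 = e3 := by linarith
      have r6 : c1 = 0 := by linarith
      have r7 : b2 = 0 := by linarith
      have r8 : a2 = 0 := by linarith
      have r9 : b1 = e3 := by linarith
      rw [Submodule.mem_span_singleton]
      refine ⟨e3, ?_⟩
      simp only [g4, Prod.smul_mk, Prod.mk.injEq, r1, r2, r3, r4, r5, r6, r7, r8, r9]
      refine ⟨?_, ?_, ?_, ?_⟩ <;> simp [smul_eq_C_mul] <;> ring
    · exact fun hq => span_single_ker cmT_g4 _ hq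
  -- ν = 4 linear independence
  · rw [Fintype.linearIndependent_iff]
    intro g hg i
    fin_cases i
    have h := congrArg Prod.fst hg
    simp only [Fin.sum_univ_one, Matrix.cons_val_zero, g4, Prod.smul_mk, Prod.fst_add,
      Prod.fst_zero, smul_eq_C_mul] at h
    have hX : (X 1 ^ 2 : MvPolynomial (Fin 2) ℝ) ≠ 0 := pow_ne_zero _ (X_ne_zero _)
    rcases mul_eq_zero.mp h with h' | h'
    · simpa using h'
    · exact absurd h' hX
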